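/- Each operator T_i satisfies the quadratic Hecke relation (T_i − q)∘(T_i + 1) = 0 as operators on Frac(R); equivalently, T_i(T_i f) = (q−1)·T_i f + q·f for all f ∈ Frac(R). -/

import Mathlib

open scoped Classical

noncomputable section
namespace BBF

abbrev Lat (n : ℕ) := Fin n → ℤ

abbrev RootT (n : ℕ) := (Lat n) × ((Lat n) →+ ℤ)

def rneg {n : ℕ} (α : RootT n) : RootT n := (-α.1, -α.2)

/-- The group structure that `AddAut` carried in the older Mathlib (composition as
multiplication); current Mathlib makes `AddAut A` an additive group instead. -/
instance addAutMulGroup (A : Type*) [Add A] : Group (AddAut A) where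
  mul g h := AddEquiv.trans h g
  one := AddEquiv.refl _
  inv := AddEquiv.symm
  mul_assoc _ _ _ := rfl
  one_mul _ := rfl
  mul_one _ := rfl
  inv_mul_cancel := AddEquiv.self_trans_symm

def reflAut' {n : ℕ} (a : Lat n) (f : (Lat n) →+ ℤ) : AddAut (Lat n) :=
  if h : f a = 2 then
    { toFun := fun v => v - f v • a
      invFun := fun v => v - f v • a
      left_inv := by
        intro v
        have hf : f (v - f v • a) = - f v := by
          rw [map_sub, map_zsmul, smul_eq_mul, h]; ring
        simp only [hf, neg_smul, sub_neg_eq_add, sub_add_cancel]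
      right_inv := by
        intro v
        have hf : f (v - f v • a) = - f v := by
          rw [map_sub, map_zsmul, smul_eq_mul, h]; ring
        simp only [hf, neg_smul, sub_neg_eq_add, sub_add_cancel]
      map_add' := by
        intro x y
        simp only [map_add, add_smul]
        abel }
  else 1

def ract {n : ℕ} (u : AddAut (Lat n)) (α : RootT n) : RootT n :=
  (u α.1, α.2.comp u.symm.toAddMonoidHom)

/-- The raw data of a based root system on the coweight lattice `ℤⁿ`:
the set of roots `Φ`, the positive roots `pos`, the simple roots, (half the sum of
the positive coroots) `rho`, and the longest Weyl group element `w0`.  Each root is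
recorded as the pair (coroot, pairing functional ⟨α, ·⟩). -/
structure PreCtx (n : ℕ) where
  Φ : Finset (RootT n)
  pos : Finset (RootT n)
  simple : Fin n → RootT n
  rho : Lat n
  w0 : AddAut (Lat n)

variable {n : ℕ}

/-- The simple reflections. -/
def PreCtx.sref (C : PreCtx n) (i : Fin n) : AddAut (Lat n) :=
  reflAut' (C.simple i).1 (C.simple i).2

/-- The Weyl group, generated by the simple reflections. -/
def PreCtx.W (C : PreCtx n) : Subgroup (AddAut (Lat n)) :=
  Subgroup.closure (Set.range C.sref)

/-- The product `s_{i₁} ⋯ s_{i_k}` attached to a word in the simple reflections. -/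
def PreCtx.wordProd (C : PreCtx n) (l : List (Fin n)) : AddAut (Lat n) :=
  (l.map C.sref).prod

/-- The length of a Weyl group element: the minimal length of an expression as a
product of simple reflections. -/
def PreCtx.len (C : PreCtx n) (w : AddAut (Lat n)) : ℕ :=
  sInf {k | ∃ l : List (Fin n), C.wordProd l = w ∧ l.length = k}

/-- `l` is a reduced word for `w`. -/
def PreCtx.IsReduced (C : PreCtx n) (w : AddAut (Lat n)) (l : List (Fin n)) : Prop :=
  C.wordProd l = w ∧ l.length = C.len w

/-- A choice of reduced word for each Weyl group element. -/
def PreCtx.redWord (C : PreCtx n) (w : AddAut (Lat n)) : List (Fin n) :=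
  if h : ∃ l, C.IsReduced w l then h.choose else []

/-- The axioms making `C : PreCtx n` a (reduced crystallographic) based root system:
`⟨α, α∨⟩ = 2`; `Φ = Φ⁺ ⊔ (−Φ⁺)`; the simple roots are positive; `Φ` is stable under the
simple reflections, and `s_i` permutes the positive roots other than `α_i`; every positive
root is Weyl-conjugate to a simple root; `2ρ∨` is the sum of the positive coroots; the Weyl
group is finite with longest element `w0`. -/
structure IsRootCtx (C : PreCtx n) : Prop where
  pairing_self : ∀ α ∈ C.Φ, α.2 α.1 = 2
  pos_subset : C.pos ⊆ C.Φ
  simple_mem : ∀ i, C.simple i ∈ C.pos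
  simple_inj : Function.Injective C.simple
  neg_mem : ∀ α ∈ C.Φ, rneg α ∈ C.Φ
  pos_decomp : C.Φ = C.pos ∪ C.pos.image rneg
  pos_disj : Disjoint C.pos (C.pos.image rneg)
  refl_stable : ∀ i, ∀ α ∈ C.Φ, ract (C.sref i) α ∈ C.Φ
  refl_pos : ∀ i, ∀ α ∈ C.pos, α ≠ C.simple i → ract (C.sref i) α ∈ C.pos
  simple_conj : ∀ α ∈ C.pos, ∃ w ∈ C.W, ∃ i, ract w (C.simple i) = α
  rho_spec : (2 : ℤ) • C.rho = ∑ α ∈ C.pos, α.1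
  Wfin : (C.W : Set (AddAut (Lat n))).Finite
  w0_mem : C.w0 ∈ C.W
  w0_max : ∀ w ∈ C.W, C.len w ≤ C.len C.w0

/-- A Hecke character datum: the set `neg1 = Φ⁺₋₁` of positive roots on which the character
acts by `−1` (the complement `pos \ neg1 = Φ⁺_q` acts by `q`), such that
`Φ⁺₋₁ ∪ (−Φ⁺₋₁)` and `Φ⁺_q ∪ (−Φ⁺_q)` are stable under the Weyl group. -/
structure IsEps (C : PreCtx n) (neg1 : Finset (RootT n)) : Prop where
  subset : neg1 ⊆ C.pos
  stable_neg1 : ∀ w ∈ C.W, ∀ α : RootT n, (α ∈ neg1 ∨ rneg α ∈ neg1) →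
      (ract w α ∈ neg1 ∨ rneg (ract w α) ∈ neg1)
  stable_q : ∀ w ∈ C.W, ∀ α : RootT n, (α ∈ C.pos \ neg1 ∨ rneg α ∈ C.pos \ neg1) →
      (ract w α ∈ C.pos \ neg1 ∨ rneg (ract w α) ∈ C.pos \ neg1)


section Alg

/-- `ℂ[q,q⁻¹]`, the ring of Laurent polynomials in `q` over `ℂ`. -/
abbrev LP := LaurentPolynomial ℂ

/-- The group algebra `k[P∨]` of the coweight lattice. -/
abbrev Rng (k : Type) [CommRing k] (n : ℕ) : Type := AddMonoidAlgebra k (Lat n)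

instance (k : Type) [CommRing k] [IsDomain k] (n : ℕ) : IsDomain (Rng k n) :=
  NoZeroDivisors.to_isDomain _

variable (k : Type) [CommRing k] {n : ℕ}

/-- The basis element `π^μ` of the group algebra. -/
def piR (μ : Lat n) : Rng k n := AddMonoidAlgebra.single μ 1

/-- `q` as an element of `ℂ[q,q⁻¹][P∨]`. -/
def qR (n : ℕ) : Rng LP n := AddMonoidAlgebra.single 0 (LaurentPolynomial.T 1)

/-- The ring automorphism of `k[P∨]` induced by an automorphism of `P∨`. -/
def actR (u : AddAut (Lat n)) : Rng k n ≃ₐ[k] Rng k n :=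
  AddMonoidAlgebra.domCongr k k u

variable (K : Type) [Field K]

/-- The image of `π^μ` in the fraction field of `k[P∨]`. -/
def piK [Algebra (Rng k n) K] (μ : Lat n) : K := algebraMap (Rng k n) K (piR k μ)

/-- The image of `q` in the fraction field of `ℂ[q,q⁻¹][P∨]`. -/
def qK (n : ℕ) [Algebra (Rng LP n) K] : K := algebraMap (Rng LP n) K (qR n)

/-- The field endomorphism of the fraction field of `k[P∨]` induced by an
automorphism of `P∨` (e.g. a Weyl group element). -/
def actK [Algebra (Rng k n) K] [IsFractionRing (Rng k n) K] (u : AddAut (Lat n)) : K →+* K :=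
  IsFractionRing.lift
    (g := (algebraMap (Rng k n) K).comp ((actR k u : Rng k n ≃+* Rng k n) : Rng k n →+* Rng k n))
    (by
      rw [RingHom.coe_comp]
      exact (IsFractionRing.injective (Rng k n) K).comp (actR k u).injective)

end Alg

section GenericOps

variable (k : Type) [CommRing k] {n : ℕ}
variable (K : Type) [Field K] [Algebra (Rng k n) K] [IsFractionRing (Rng k n) K]
variable (C : PreCtx n)

/-- The Demazure operator `∂_i f = (π^{−α_i∨}·f − s_i(f))/(π^{−α_i∨} − 1)` on `Frac(k[P∨])`. -/
def Dem (i : Fin n) (f : K) : K :=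
  (piK k K (-(C.simple i).1) * f - actK k K (C.sref i) f) / (piK k K (-(C.simple i).1) - 1)

/-- The composite `∂_{i₁} ∘ ⋯ ∘ ∂_{i_k}` of Demazure operators along a word. -/
def Demword (l : List (Fin n)) : K → K :=
  l.foldr (fun i F => fun f => Dem k K C i (F f)) id

/-- The operator `𝔇_i = ∂_i − 1`. -/
def DD (i : Fin n) (f : K) : K := Dem k K C i f - f

/-- The composite `𝔇_{i₁} ∘ ⋯ ∘ 𝔇_{i_k}` along a word. -/
def DDword (l : List (Fin n)) : K → K :=
  l.foldr (fun i F => fun f => DD k K C i (F f)) id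

/-- `𝔇_w`, computed using a chosen reduced word for `w`. -/
def DDw (w : AddAut (Lat n)) : K → K := DDword k K C (C.redWord w)

/-- The alternator `𝒜 = ∑_{w ∈ W} (−1)^{ℓ(w)} w` as an operator. -/
def Alt (f : K) : K :=
  ∑ᶠ w ∈ (C.W : Set (AddAut (Lat n))), (-1 : K) ^ (C.len w) * actK k K w f

end GenericOps

section HeckeOps

variable {n : ℕ}
variable (K : Type) [Field K] [Algebra (Rng LP n) K] [IsFractionRing (Rng LP n) K]
variable (C : PreCtx n)

/-- The Hecke operator `T_i` attached to the character datum `neg1`: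
`T_i f = (ε_i + (1−q)/(1−π^{−α_i∨}))·s_i(f) + ((q−1)/(1−π^{−α_i∨}))·f`,
where `ε_i = −1` if `α_i ∈ Φ⁺₋₁` and `ε_i = q` otherwise. -/
def Ti (neg1 : Finset (RootT n)) (i : Fin n) (f : K) : K :=
  ((if C.simple i ∈ neg1 then (-1 : K) else qK K n)
      + (1 - qK K n) / (1 - piK LP K (-(C.simple i).1))) * actK LP K (C.sref i) f
    + ((qK K n - 1) / (1 - piK LP K (-(C.simple i).1))) * f

/-- The composite `T_{i₁} ∘ ⋯ ∘ T_{i_k}` along a word. -/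
def Tword (neg1 : Finset (RootT n)) (l : List (Fin n)) : K → K :=
  l.foldr (fun i F => fun f => Ti K C neg1 i (F f)) id

/-- `T_w`, computed using a chosen reduced word for `w`. -/
def Tw (neg1 : Finset (RootT n)) (w : AddAut (Lat n)) : K → K :=
  Tword K C neg1 (C.redWord w)

/-- The conjugated Hecke operator `𝔗_i = π^{ρ∨_ε} ∘ T_i ∘ π^{−ρ∨_ε}`. -/
def Tfrak (neg1 : Finset (RootT n)) (rE : Lat n) (i : Fin n) (f : K) : K :=
  piK LP K rE * Ti K C neg1 i (piK LP K (-rE) * f)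

/-- The composite `𝔗_{i₁} ∘ ⋯ ∘ 𝔗_{i_k}` along a word. -/
def Tfrakword (neg1 : Finset (RootT n)) (rE : Lat n) (l : List (Fin n)) : K → K :=
  l.foldr (fun i F => fun f => Tfrak K C neg1 rE i (F f)) id

/-- `𝔗_w`, computed using a chosen reduced word for `w`. -/
def TfrakW (neg1 : Finset (RootT n)) (rE : Lat n) (w : AddAut (Lat n)) : K → K :=
  Tfrakword K C neg1 rE (C.redWord w)

/-- The operator `∑_{w ∈ W} 𝔗_w`. -/
def SumTfrak (neg1 : Finset (RootT n)) (rE : Lat n) (f : K) : K :=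
  ∑ᶠ w ∈ (C.W : Set (AddAut (Lat n))), TfrakW K C neg1 rE w f

/-- The multiplication operator `∏_{α ∈ S} (1 − q π^{α∨})` for a set `S` of roots. -/
def Dprod (S : Finset (RootT n)) : K := ∏ α ∈ S, (1 - qK K n * piK LP K α.1)

/-- The operator `Ω' = D₋₁^{−1} ∘ (∑_{w∈W} 𝔗_w) ∘ D_q^{−1}`. -/
def Omega' (neg1 : Finset (RootT n)) (rE : Lat n) (f : K) : K :=
  (Dprod K neg1)⁻¹ * SumTfrak K C neg1 rE ((Dprod K (C.pos \ neg1))⁻¹ * f)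

end HeckeOps


def demazureLusztig {K : Type*} [Field K] (s : K →+* K) (a q ε f : K) : K :=
  (ε + (1 - q) / (1 - a)) * s f + ((q - 1) / (1 - a)) * f

theorem demazureLusztig_quadratic {K : Type*} [Field K] (s : K →+* K)
    (hs : Function.Involutive s) {a q ε : K} (ha : a * s a = 1) (ha1 : a ≠ 1) (hq : s q = q)
    (hε : s ε = ε) (hεq : (ε - q) * (ε + 1) = 0) (f : K) :
    demazureLusztig s a q ε (demazureLusztig s a q ε f)
      = (q - 1) * demazureLusztig s a q ε f + q * f := by
  have ha0 : a ≠ 0 := left_ne_zero_of_mul_eq_one ha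
  have h1a : 1 - a ≠ 0 := sub_ne_zero.2 ha1.symm
  have hsa : s a = a⁻¹ := eq_inv_of_mul_eq_one_right ha
  have h1sa : 1 - a⁻¹ = -(1 - a) / a := by field_simp; ring
  simp only [demazureLusztig, map_add, map_mul, map_div₀, map_sub, map_one, hs _, hq, hε, hsa,
    h1sa]
  field_simp
  linear_combination (1 - a) ^ 2 * f * hεq

section FractionField

variable {k : Type} [CommRing k] {n : ℕ} {K : Type} [Field K] [Algebra (Rng k n) K]

theorem piK_add (μ ν : Lat n) : piK k K (μ + ν) = piK k K μ * piK k K ν := by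
  simp only [piK, piR, ← map_mul, AddMonoidAlgebra.single_mul_single, mul_one]

theorem piK_zero : piK k K (0 : Lat n) = 1 := map_one _

variable [IsFractionRing (Rng k n) K]

theorem piK_injective [Nontrivial k] : Function.Injective (piK k K : Lat n → K) := fun _ _ h =>
  AddMonoidAlgebra.single_left_injective one_ne_zero (IsFractionRing.injective (Rng k n) K h :)

theorem actK_algebraMap (u : AddAut (Lat n)) (x : Rng k n) :
    actK k K u (algebraMap (Rng k n) K x) = algebraMap (Rng k n) K (actR k u x) :=
  IsFractionRing.lift_algebraMap _ _

theorem actK_piK (u : AddAut (Lat n)) (μ : Lat n) : actK k K u (piK k K μ) = piK k K (u μ) := by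
  rw [piK, actK_algebraMap]
  simp [actR, piR, piK]

theorem actK_involutive {u : AddAut (Lat n)} (hu : Function.Involutive u) :
    Function.Involutive (actK k K u) := by
  have hsymm : u.symm = u := AddEquiv.ext fun x => u.symm_apply_eq.2 (hu x).symm
  have hRsymm : (actR k u).symm = actR k u := by
    rw [actR, AddMonoidAlgebra.domCongr_symm, hsymm]
  have hR : Function.Involutive (actR k u) := fun x => by
    nth_rw 1 [← hRsymm]
    exact (actR k u).symm_apply_apply x
  have hcomp : (actK k K u).comp (actK k K u) = RingHom.id K :=
    IsFractionRing.ringHom_ext (A := Rng k n) fun x => by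
      simp only [RingHom.comp_apply, RingHom.id_apply, actK_algebraMap, hR x]
  exact fun f => RingHom.congr_fun hcomp f

end FractionField

theorem actK_qK {n : ℕ} {K : Type} [Field K] [Algebra (Rng LP n) K] [IsFractionRing (Rng LP n) K]
    (u : AddAut (Lat n)) : actK LP K u (qK K n) = qK K n := by
  rw [qK, actK_algebraMap]
  simp [actR, qR]

theorem reflAut'_apply_self {n : ℕ} {a : Lat n} {f : Lat n →+ ℤ} (h : f a = 2) :
    reflAut' a f a = -a := by
  rw [reflAut', dif_pos h]
  change a - f a • a = -a
  rw [h, two_zsmul]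
  abel

theorem reflAut'_involutive {n : ℕ} (a : Lat n) (f : Lat n →+ ℤ) :
    Function.Involutive (reflAut' a f) := by
  have hsymm : (reflAut' a f).symm = reflAut' a f := by
    unfold reflAut'
    split <;> rfl
  intro v
  nth_rw 1 [← hsymm]
  exact (reflAut' a f).symm_apply_apply v

theorem Ti_eq_demazureLusztig {n : ℕ} (K : Type) [Field K] [Algebra (Rng LP n) K]
    [IsFractionRing (Rng LP n) K] (C : PreCtx n) (neg1 : Finset (RootT n)) (i : Fin n) :
    Ti K C neg1 i = demazureLusztig (actK LP K (C.sref i)) (piK LP K (-(C.simple i).1)) (qK K n)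
      (if C.simple i ∈ neg1 then -1 else qK K n) :=
  rfl

theorem statement2_general (n : ℕ) (C : PreCtx n) (hC : IsRootCtx C)
    (neg1 : Finset (RootT n))
    (K : Type) [Field K] [Algebra (Rng LP n) K] [IsFractionRing (Rng LP n) K] :
    ∀ (i : Fin n) (f : K),
      Ti K C neg1 i (Ti K C neg1 i f) = (qK K n - 1) * Ti K C neg1 i f + qK K n * f := by
  intro i f
  have hpair : (C.simple i).2 (C.simple i).1 = 2 :=
    hC.pairing_self _ (hC.pos_subset (hC.simple_mem i))
  have hcoroot : (C.simple i).1 ≠ 0 := fun h => by simp [h] at hpair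
  rw [Ti_eq_demazureLusztig]
  refine demazureLusztig_quadratic _ (actK_involutive (reflAut'_involutive _ _)) ?_ ?_
    (actK_qK _) ?_ ?_ f
  · rw [actK_piK, map_neg, reflAut'_apply_self hpair, neg_neg, ← piK_add, neg_add_cancel, piK_zero]
  · rw [← piK_zero (k := LP) (n := n)]
    exact piK_injective.ne (neg_ne_zero.2 hcoroot)
  · split_ifs <;> simp [actK_qK]
  · split_ifs <;> ring

/-- each operator `T_i` satisfies the quadratic Hecke relation
`(T_i − q)(T_i + 1) = 0`, i.e. `T_i(T_i f) = (q−1)·T_i f + q·f` for all `f ∈ Frac(R)`. -/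
theorem statement2 (n : ℕ) (C : PreCtx n) (hC : IsRootCtx C)
    (neg1 : Finset (RootT n)) (hE : IsEps C neg1)
    (K : Type) [Field K] [Algebra (Rng LP n) K] [IsFractionRing (Rng LP n) K] :
    ∀ (i : Fin n) (f : K),
      Ti K C neg1 i (Ti K C neg1 i f) = (qK K n - 1) * Ti K C neg1 i f + qK K n * f :=
  statement2_general n C hC neg1 K

end BBF

end
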